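/- Let n ≥ 1 and let X_1, …, X_n be independent {0,1}-valued random variables on a probability space with Pr[X_i = 1] = p_i, where p_i ∈ [0, 1] for every i ∈ {1,…,n}. Let p = ∑_{i=1}^n p_i. Then Pr[∑_{i=1}^n X_i = 1] ≤ p · e^{−p+1}. -/

import Mathlib

open MeasureTheory ProbabilityTheory Finset

/-! Exactly one `X i` equals `1` only if, for some `i`, `X i = 1` and `X j = 0` for all `j ≠ i`.
By independence this event has probability at most `p i * ∏_{j ≠ i} (1 - p j)`, and
`1 - x ≤ exp (-x)` bounds the product by `exp (-(p - p i)) ≤ exp (1 - p)` since `p i ≤ 1`.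
Summing over `i` gives `p * exp (1 - p)`. -/

theorem Finset.exists_eq_pi_single_of_sum_eq_one {ι : Type*} [Fintype ι] [DecidableEq ι]
    {f : ι → ℕ} (hf : ∑ i, f i = 1) : ∃ i, f = Pi.single i 1 := by
  obtain ⟨i, hi⟩ := (Finsupp.sum_eq_one_iff (Finsupp.equivFunOnFinite.symm f)).mp <| by
    rwa [Finsupp.sum_fintype _ _ fun _ => rfl]
  exact ⟨i, by simpa [← Finsupp.single_eq_pi_single] using congrArg (⇑) hi⟩

theorem Real.prod_one_sub_le_exp_neg_sum {ι : Type*} (s : Finset ι) {p : ι → ℝ}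
    (hp : ∀ i ∈ s, p i ≤ 1) : ∏ i ∈ s, (1 - p i) ≤ Real.exp (-∑ i ∈ s, p i) := by
  rw [← sum_neg_distrib, Real.exp_sum]
  exact prod_le_prod (fun i hi => sub_nonneg.mpr (hp i hi))
    fun i _ => Real.one_sub_le_exp_neg (p i)

theorem sum_mul_prod_erase_one_sub_le {ι : Type*} [Fintype ι] [DecidableEq ι] {p : ι → ℝ}
    (hp : ∀ i, p i ∈ Set.Icc (0 : ℝ) 1) :
    ∑ i, p i * ∏ j ∈ univ.erase i, (1 - p j) ≤ (∑ i, p i) * Real.exp (-(∑ i, p i) + 1) := by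
  rw [sum_mul]
  refine sum_le_sum fun i _ => mul_le_mul_of_nonneg_left ?_ (hp i).1
  calc ∏ j ∈ univ.erase i, (1 - p j)
      ≤ Real.exp (-∑ j ∈ univ.erase i, p j) :=
        Real.prod_one_sub_le_exp_neg_sum _ fun j _ => (hp j).2
    _ = Real.exp (-(∑ j, p j) + p i) := by rw [← add_sum_erase _ _ (mem_univ i)]; ring_nf
    _ ≤ Real.exp (-(∑ j, p j) + 1) := Real.exp_le_exp.mpr (by linarith [(hp i).2])

theorem ProbabilityTheory.iIndepFun.measure_forall_eq {Ω ι : Type*} {β : ι → Type*}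
    [MeasurableSpace Ω] {μ : Measure Ω} [Fintype ι] [∀ i, MeasurableSpace (β i)]
    [∀ i, MeasurableSingletonClass (β i)] {X : ∀ i, Ω → β i} (hind : iIndepFun X μ)
    (x : ∀ i, β i) : μ {ω | ∀ i, X i ω = x i} = ∏ i, μ {ω | X i ω = x i} := by
  have := hind.measure_inter_preimage_eq_mul univ (sets := fun i => {x i})
    fun i _ => measurableSet_singleton _
  convert this using 2
  · ext; simp
  · rfl

theorem ProbabilityTheory.iIndepFun.measure_sum_eq_one_le {Ω ι : Type*} [MeasurableSpace Ω]
    {μ : Measure Ω} [IsProbabilityMeasure μ] [Fintype ι] [DecidableEq ι] {X : ι → Ω → ℕ}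
    (hind : iIndepFun X μ) (hmeas : ∀ i, Measurable (X i)) :
    μ {ω | ∑ i, X i ω = 1} ≤
      ∑ i, μ {ω | X i ω = 1} * ∏ j ∈ univ.erase i, (1 - μ {ω | X j ω = 1}) := by
  have hsub : {ω | ∑ i, X i ω = 1} ⊆ ⋃ i, {ω | ∀ j, X j ω = (Pi.single i 1 : ι → ℕ) j} := by
    intro ω hω
    obtain ⟨i, hi⟩ := Finset.exists_eq_pi_single_of_sum_eq_one hω
    exact Set.mem_iUnion.mpr ⟨i, fun j => congrFun hi j⟩
  have hX_zero : ∀ j, μ {ω | X j ω = 0} ≤ 1 - μ {ω | X j ω = 1} := fun j => by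
    rw [← prob_compl_eq_one_sub (measurableSet_eq_fun (hmeas j) measurable_const)]
    exact measure_mono fun ω (h : X j ω = 0) (h' : X j ω = 1) => by omega
  refine (measure_mono hsub).trans <| (measure_iUnion_fintype_le _ _).trans <|
    sum_le_sum fun i _ => ?_
  rw [hind.measure_forall_eq, ← mul_prod_erase _ _ (mem_univ i), Pi.single_eq_same]
  gcongr with j hj
  rw [Pi.single_eq_of_ne (ne_of_mem_erase hj)]
  exact hX_zero j

theorem contention_success_upper_bound_general
    {Ω : Type*} [MeasurableSpace Ω] (μ : Measure Ω) [IsProbabilityMeasure μ]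
    (n : ℕ) (X : Fin n → Ω → ℕ) (p : Fin n → ℝ)
    (hmeas : ∀ i, Measurable (X i))
    (hind : iIndepFun X μ)
    (hp : ∀ i, μ {ω | X i ω = 1} = ENNReal.ofReal (p i))
    (hpI : ∀ i, p i ∈ Set.Icc (0 : ℝ) 1) :
    μ {ω | (∑ i, X i ω) = 1} ≤
      ENNReal.ofReal ((∑ i, p i) * Real.exp (-(∑ i, p i) + 1)) := by
  have one_sub_p_nonneg : ∀ j, 0 ≤ 1 - p j := fun j => sub_nonneg.mpr (hpI j).2
  calc μ {ω | (∑ i, X i ω) = 1}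
      ≤ ∑ i, μ {ω | X i ω = 1} * ∏ j ∈ univ.erase i, (1 - μ {ω | X j ω = 1}) :=
        hind.measure_sum_eq_one_le hmeas
    _ = ENNReal.ofReal (∑ i, p i * ∏ j ∈ univ.erase i, (1 - p j)) := by
        rw [ENNReal.ofReal_sum_of_nonneg fun i _ =>
          mul_nonneg (hpI i).1 (prod_nonneg fun j _ => one_sub_p_nonneg j)]
        refine sum_congr rfl fun i _ => ?_
        rw [ENNReal.ofReal_mul (hpI i).1,
          ENNReal.ofReal_prod_of_nonneg fun j _ => one_sub_p_nonneg j]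
        simp_rw [hp, ENNReal.ofReal_sub 1 (hpI _).1, ENNReal.ofReal_one]
    _ ≤ ENNReal.ofReal ((∑ i, p i) * Real.exp (-(∑ i, p i) + 1)) :=
        ENNReal.ofReal_le_ofReal (sum_mul_prod_erase_one_sub_le hpI)

/-- For independent {0,1}-valued random variables `X i` with
`Pr[X i = 1] = p i ∈ [0, 1]`, and `p = ∑ i, p i`, we have
`Pr[∑ i, X i = 1] ≤ p * exp (-p + 1)`. -/
theorem contention_success_upper_bound
    {Ω : Type*} [MeasurableSpace Ω] (μ : Measure Ω) [IsProbabilityMeasure μ]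
    (n : ℕ) (hn : 1 ≤ n) (X : Fin n → Ω → ℕ) (p : Fin n → ℝ)
    (hmeas : ∀ i, Measurable (X i))
    (hind : iIndepFun X μ)
    (h01 : ∀ i ω, X i ω = 0 ∨ X i ω = 1)
    (hp : ∀ i, μ {ω | X i ω = 1} = ENNReal.ofReal (p i))
    (hpI : ∀ i, p i ∈ Set.Icc (0 : ℝ) 1) :
    μ {ω | (∑ i, X i ω) = 1} ≤
      ENNReal.ofReal ((∑ i, p i) * Real.exp (-(∑ i, p i) + 1)) :=
  contention_success_upper_bound_general μ n X p hmeas hind hp hpI
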